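/- Let H(x) be a J × L polynomial parity-check matrix over R = F_2[x]/(x^N - 1), and let S ⊆ {0,...,L-1} with |S| = J + 1. Define a vector c(x) ∈ R^L by c_i(x) = perm(H_{S\i}(x)) if i ∈ S and c_i(x) = 0 otherwise, where H_{S\i}(x) is the J × J submatrix of H(x) with columns indexed by S \ {i}. Then H(x)·c(x)^T = 0, i.e., c(x) is a codeword of the QC code defined by H(x). -/
import Mathlib


open Polynomial

/-- The quotient ring `F₂[x]/(x^N - 1)`. -/
noncomputable abbrev Rq (N : ℕ) : Type := AdjoinRoot (X ^ N - C 1 : (ZMod 2)[X])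

/-- The permanent of a square matrix over a commutative ring. -/
def perm {R : Type*} [CommRing R] {n : ℕ} (B : Matrix (Fin n) (Fin n) R) : R :=
  ∑ σ : Equiv.Perm (Fin n), ∏ j, B j (σ j)

lemma neg_one_eq_one_Rq (N : ℕ) : (-1 : Rq N) = 1 := by
  have h2 : (2 : Rq N) = 0 := by
    have : (2 : Rq N) = algebraMap (ZMod 2) (Rq N) 2 := (map_ofNat _ 2).symm
    rw [this, show (2 : ZMod 2) = 0 from rfl, map_zero]
  linear_combination -h2

lemma perm_eq_det {R : Type*} [CommRing R] (hR : (-1 : R) = 1) {n : ℕ}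
    (B : Matrix (Fin n) (Fin n) R) : perm B = B.det := by
  rw [Matrix.det_apply, perm]
  rw [← Equiv.sum_comp (Equiv.inv (Equiv.Perm (Fin n)))
    (fun σ => Equiv.Perm.sign σ • ∏ i, B (σ i) i)]
  refine Finset.sum_congr rfl fun σ _ => ?_
  have h2 : Equiv.inv (Equiv.Perm (Fin n)) σ = σ⁻¹ := rfl
  have h1 : ∏ j, B j (σ j) = ∏ i, B (σ⁻¹ i) i := by
    rw [← Equiv.prod_comp σ (fun i => B (σ⁻¹ i) i)]; simp
  simp only [h2, h1]
  rcases Int.units_eq_one_or (Equiv.Perm.sign σ⁻¹) with h | h <;> rw [h]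
  · simp
  · simp only [Units.neg_smul, one_smul]
    linear_combination -(∏ i, B (σ⁻¹ i) i) * hR

/-- Lemma 6 (Smarandache–Vontobel): for a `J × L` polynomial parity-check matrix `H(x)`
over `F₂[x]/(x^N - 1)` and a size-`(J+1)` subset `S` of the columns, the vector `c(x)`
with `c_i(x) = perm(H_{S∖i}(x))` for `i ∈ S` and `c_i(x) = 0` otherwise satisfies
`H(x)·c(x)ᵀ = 0`, i.e., it is a codeword of the QC code defined by `H(x)`. -/
theorem perm_vector_is_codeword {N J L : ℕ} (hN : 0 < N) (hL : J + 1 ≤ L)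
    (H : Matrix (Fin J) (Fin L) (Rq N))
    (S : Finset (Fin L)) (hS : S.card = J + 1)
    (c : Fin L → Rq N)
    (hc : ∀ i, ∀ hi : i ∈ S,
      c i = perm (H.submatrix id fun k : Fin J =>
        (((S.erase i).orderIsoOfFin
          (by simp [Finset.card_erase_of_mem hi, hS])) k : Fin L)))
    (hc0 : ∀ i, i ∉ S → c i = 0) :
    H.mulVec c = 0 := by
  funext j
  set e : Fin (J + 1) → Fin L := fun i => S.orderEmbOfFin hS i with he
  have hemem : ∀ i, e i ∈ S := fun i => S.orderEmbOfFin_mem hS i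
  have hemono : StrictMono e := (S.orderEmbOfFin hS).strictMono
  -- the augmented matrix
  set M : Matrix (Fin (J + 1)) (Fin (J + 1)) (Rq N) :=
    Matrix.of fun r i => H (Fin.cases j (fun k => k) r) (e i) with hM
  have hdet : M.det = 0 := by
    apply Matrix.det_zero_of_row_eq (i := 0) (j := j.succ) (Fin.succ_ne_zero j).symm
    funext i
    simp [hM]
  -- identify c (e i) with the cofactor
  have hkey : ∀ i : Fin (J + 1), c (e i) = (M.submatrix Fin.succ i.succAbove).det := by
    intro i
    have hcard : (S.erase (e i)).card = J := by
      simp [Finset.card_erase_of_mem (hemem i), hS]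
    have hcols : (fun k : Fin J => e (i.succAbove k)) = (S.erase (e i)).orderEmbOfFin hcard := by
      apply Finset.orderEmbOfFin_unique
      · intro k
        refine Finset.mem_erase.2 ⟨fun hEq => ?_, hemem _⟩
        exact Fin.succAbove_ne i k (hemono.injective hEq)
      · exact hemono.comp (Fin.strictMono_succAbove i)
    rw [hc (e i) (hemem i), perm_eq_det (neg_one_eq_one_Rq N)]
    congr 1
    funext k l
    simp only [Matrix.submatrix_apply, id_eq, hM, Matrix.of_apply, Fin.cases_succ]
    rw [Finset.coe_orderIsoOfFin_apply, ← hcols]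
  -- expand the determinant
  have hexp := Matrix.det_succ_row_zero M
  rw [hdet] at hexp
  have hrow0 : ∀ i, M 0 i = H j (e i) := fun i => rfl
  -- compute the mulVec entry
  have hsum : H.mulVec c j = ∑ i : Fin (J + 1), H j (e i) * c (e i) := by
    rw [Matrix.mulVec, dotProduct]
    rw [← Finset.sum_subset (Finset.subset_univ S)
      (fun x _ hx => by rw [hc0 x hx, mul_zero])]
    rw [← Finset.sum_attach S (fun x => H j x * c x)]
    exact (Equiv.sum_comp (S.orderIsoOfFin hS).toEquiv
      (fun x : S => H j x * c x)).symm
  rw [Pi.zero_apply, hsum]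
  calc ∑ i : Fin (J + 1), H j (e i) * c (e i)
      = ∑ i : Fin (J + 1), (-1 : Rq N) ^ (i : ℕ) * M 0 i *
          (M.submatrix Fin.succ i.succAbove).det := by
        refine Finset.sum_congr rfl fun i _ => ?_
        rw [hkey i, hrow0 i, neg_one_eq_one_Rq, one_pow, one_mul]
    _ = 0 := hexp.symm
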